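/- Every tree-sibling time-consistent phylogenetic network is an orchard network. -/
import Mathlib


/-- A finite directed graph on natural-number vertices, with no parallel arcs
(arcs form a `Finset` of ordered pairs). -/
structure Digraph' where
  V : Finset ℕ
  A : Finset (ℕ × ℕ)
  mem_V : ∀ e ∈ A, e.1 ∈ V ∧ e.2 ∈ V

namespace Digraph'

def inDeg (N : Digraph') (v : ℕ) : ℕ := (N.A.filter (fun e => e.2 = v)).card

def outDeg (N : Digraph') (v : ℕ) : ℕ := (N.A.filter (fun e => e.1 = v)).card

/-- Reachability by a directed path (including paths of length 0). -/
def Reach (N : Digraph') : ℕ → ℕ → Prop :=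
  Relation.ReflTransGen (fun u v => (u, v) ∈ N.A)

def Acyclic (N : Digraph') : Prop := ∀ u v, (u, v) ∈ N.A → ¬ N.Reach v u

def IsLeaf (N : Digraph') (v : ℕ) : Prop := v ∈ N.V ∧ N.outDeg v = 0

def IsTreeVertex (N : Digraph') (v : ℕ) : Prop :=
  v ∈ N.V ∧ N.inDeg v = 1 ∧ N.outDeg v = 2

def IsRet (N : Digraph') (v : ℕ) : Prop :=
  v ∈ N.V ∧ N.inDeg v = 2 ∧ N.outDeg v = 1

/-- `N` is a (binary) phylogenetic network on leaf set `X`. -/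
structure IsPhylo (N : Digraph') (X : Finset ℕ) : Prop where
  acyclic : N.Acyclic
  X_sub : X ⊆ N.V
  leafSet : ∀ v ∈ N.V, (N.outDeg v = 0 ↔ v ∈ X)
  root : ∃ ρ ∈ N.V, N.inDeg ρ = 0 ∧ N.outDeg ρ = 2 ∧ ∀ v ∈ N.V, N.Reach ρ v
  degrees : ∀ v ∈ N.V,
    (N.inDeg v = 0 ∧ N.outDeg v = 2) ∨ (N.inDeg v = 1 ∧ N.outDeg v = 0) ∨
    (N.inDeg v = 1 ∧ N.outDeg v = 2) ∨ (N.inDeg v = 2 ∧ N.outDeg v = 1)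

/-- The degenerate single-vertex network. -/
def IsSingle (N : Digraph') : Prop := ∃ x, N.V = {x} ∧ N.A = ∅

/-- `{a, b}` is a cherry: two distinct leaves with a common parent. -/
def IsCherry (N : Digraph') (a b : ℕ) : Prop :=
  a ≠ b ∧ N.IsLeaf a ∧ N.IsLeaf b ∧ ∃ p, (p, a) ∈ N.A ∧ (p, b) ∈ N.A

/-- `{a, b}` is a reticulated cherry with `b` the reticulation leaf. -/
def IsRetCherry (N : Digraph') (a b : ℕ) : Prop :=
  a ≠ b ∧ N.IsLeaf a ∧ N.IsLeaf b ∧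
  ∃ pa pb, (pa, a) ∈ N.A ∧ (pb, b) ∈ N.A ∧ N.inDeg pb = 2 ∧ (pa, pb) ∈ N.A

/-- `N'` is obtained from `N` by reducing the leaf `b` of the cherry `{a, b}`:
delete `b` and suppress the resulting in-degree-1 out-degree-1 vertex
(if the common parent is the root, delete `b` and the root, leaving the single
vertex `a`). -/
def ReduceCherry (N N' : Digraph') (a b : ℕ) : Prop :=
  N.IsCherry a b ∧ ∃ p, (p, a) ∈ N.A ∧ (p, b) ∈ N.A ∧
    ((N.inDeg p = 0 ∧ N'.V = {a} ∧ N'.A = ∅) ∨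
     (∃ u, (u, p) ∈ N.A ∧ N'.V = (N.V.erase b).erase p ∧
        N'.A = insert (u, a) (((N.A.erase (u, p)).erase (p, a)).erase (p, b))))

/-- `N'` is obtained from `N` by cutting the reticulated cherry `{a, b}` with `b`
the reticulation leaf: delete the reticulation arc from the parent of `a` to the
parent of `b`, and suppress the two resulting in-degree-1 out-degree-1 vertices. -/
def CutRetCherry (N N' : Digraph') (a b : ℕ) : Prop :=
  N.IsRetCherry a b ∧ ∃ pa pb ua q,
    (pa, a) ∈ N.A ∧ (pb, b) ∈ N.A ∧ N.inDeg pb = 2 ∧ (pa, pb) ∈ N.A ∧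
    (ua, pa) ∈ N.A ∧ (q, pb) ∈ N.A ∧ q ≠ pa ∧
    N'.V = (N.V.erase pa).erase pb ∧
    N'.A = insert (ua, a) (insert (q, b)
      (((((N.A.erase (pa, pb)).erase (ua, pa)).erase (pa, a)).erase (q, pb)).erase (pb, b)))

/-- A single cherry reduction. -/
def CherryStep (N N' : Digraph') : Prop :=
  ∃ a b, ReduceCherry N N' a b ∨ CutRetCherry N N' a b

/-- `N` is an orchard network: some sequence of cherry reductions reduces it to a
single vertex. -/
def IsOrchard (N : Digraph') : Prop :=
  ∃ N', Relation.ReflTransGen CherryStep N N' ∧ IsSingle N'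

/-- The ancestral set `γ(x)`: the non-leaf vertices from which `x` is reachable. -/
def gamma (N : Digraph') (x : ℕ) : Set ℕ :=
  {v | v ∈ N.V ∧ N.outDeg v ≠ 0 ∧ N.Reach v x}

/-- The number of directed paths in `N` from `u` to `x` (a path is recorded as the
list of its vertices; the single-vertex path counts when `u = x`). -/
noncomputable def numPaths (N : Digraph') (u x : ℕ) : ℕ :=
  Set.ncard {l : List ℕ | l.head? = some u ∧ l.getLast? = some x ∧
    l.Chain' (fun p q => (p, q) ∈ N.A)}

/-- Tree-sibling: every reticulation has a parent that is also the parent of a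
tree vertex or a leaf. -/
def TreeSibling (N : Digraph') : Prop :=
  ∀ v ∈ N.V, N.inDeg v = 2 → ∃ p w, (p, v) ∈ N.A ∧ (p, w) ∈ N.A ∧ w ≠ v ∧
    (N.IsTreeVertex w ∨ N.IsLeaf w)

/-- Time-consistent: there is a temporal labelling of the vertices. -/
def TimeConsistent (N : Digraph') : Prop :=
  ∃ t : ℕ → ℕ, ∀ u v, (u, v) ∈ N.A →
    (N.inDeg v = 2 → t u = t v) ∧ (N.inDeg v ≠ 2 → t u < t v)

/-- Tree-child: every non-leaf vertex has a child that is a tree vertex or a leaf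
(equivalently, a child of in-degree one). -/
def TreeChild (N : Digraph') : Prop :=
  ∀ v ∈ N.V, N.outDeg v ≠ 0 → ∃ w, (v, w) ∈ N.A ∧ N.inDeg w = 1

end Digraph'

namespace Digraph'

variable {N : Digraph'} {X : Finset ℕ}

lemma mem_V_fst {u v : ℕ} (h : (u,v) ∈ N.A) : u ∈ N.V := (N.mem_V _ h).1
lemma mem_V_snd {u v : ℕ} (h : (u,v) ∈ N.A) : v ∈ N.V := (N.mem_V _ h).2

lemma reach_of_arc {u v : ℕ} (h : (u,v) ∈ N.A) : N.Reach u v :=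
  Relation.ReflTransGen.single h

lemma arc_ne (hac : N.Acyclic) {u v : ℕ} (h : (u,v) ∈ N.A) : u ≠ v := by
  rintro rfl; exact hac u u h Relation.ReflTransGen.refl

lemma no_out_of_leaf {v : ℕ} (h : N.outDeg v = 0) {w : ℕ} (hw : (v,w) ∈ N.A) : False := by
  have : (v,w) ∈ N.A.filter (fun e => e.1 = v) := Finset.mem_filter.2 ⟨hw, rfl⟩
  rw [Finset.card_eq_zero.1 h] at this
  exact absurd this (Finset.notMem_empty _)

lemma reach_leaf {v w : ℕ} (h : N.outDeg v = 0) (hr : N.Reach v w) : w = v := by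
  cases (Relation.ReflTransGen.cases_head hr) with
  | inl h' => exact h'.symm
  | inr h' => obtain ⟨c, hc, _⟩ := h'; exact absurd hc (no_out_of_leaf h)

lemma in_arc_exists {v : ℕ} (h : N.inDeg v ≠ 0) : ∃ u, (u,v) ∈ N.A := by
  have : (N.A.filter (fun e => e.2 = v)).Nonempty := Finset.card_ne_zero.1 h
  obtain ⟨e, he⟩ := this
  obtain ⟨heA, he2⟩ := Finset.mem_filter.1 he
  exact ⟨e.1, by rwa [show (e.1, v) = e by rw [← he2]]⟩

lemma out_arc_exists {v : ℕ} (h : N.outDeg v ≠ 0) : ∃ w, (v,w) ∈ N.A := by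
  have : (N.A.filter (fun e => e.1 = v)).Nonempty := Finset.card_ne_zero.1 h
  obtain ⟨e, he⟩ := this
  obtain ⟨heA, he1⟩ := Finset.mem_filter.1 he
  exact ⟨e.2, by rwa [show (v, e.2) = e by rw [← he1]]⟩

lemma parent_unique {v x y : ℕ} (h : N.inDeg v = 1) (hx : (x,v) ∈ N.A) (hy : (y,v) ∈ N.A) :
    x = y := by
  have hx' : (x,v) ∈ N.A.filter (fun e => e.2 = v) := Finset.mem_filter.2 ⟨hx, rfl⟩
  have hy' : (y,v) ∈ N.A.filter (fun e => e.2 = v) := Finset.mem_filter.2 ⟨hy, rfl⟩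
  have := Finset.card_le_one.1 h.le _ hx' _ hy'
  exact congrArg Prod.fst this

lemma child_unique {v x y : ℕ} (h : N.outDeg v = 1) (hx : (v,x) ∈ N.A) (hy : (v,y) ∈ N.A) :
    x = y := by
  have hx' : (v,x) ∈ N.A.filter (fun e => e.1 = v) := Finset.mem_filter.2 ⟨hx, rfl⟩
  have hy' : (v,y) ∈ N.A.filter (fun e => e.1 = v) := Finset.mem_filter.2 ⟨hy, rfl⟩
  have := Finset.card_le_one.1 h.le _ hx' _ hy'
  exact congrArg Prod.snd this

lemma two_le_inDeg {v x y : ℕ} (hx : (x,v) ∈ N.A) (hy : (y,v) ∈ N.A) (hxy : x ≠ y) :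
    2 ≤ N.inDeg v := by
  have : ({(x,v), (y,v)} : Finset (ℕ × ℕ)) ⊆ N.A.filter (fun e => e.2 = v) := by
    intro e he
    rcases Finset.mem_insert.1 he with rfl | he
    · exact Finset.mem_filter.2 ⟨hx, rfl⟩
    · rw [Finset.mem_singleton.1 he]; exact Finset.mem_filter.2 ⟨hy, rfl⟩
  calc 2 = ({(x,v), (y,v)} : Finset (ℕ × ℕ)).card := by
            rw [Finset.card_insert_of_notMem (by simp [hxy]), Finset.card_singleton]
    _ ≤ _ := Finset.card_le_card this
  
lemma two_le_outDeg {v x y : ℕ} (hx : (v,x) ∈ N.A) (hy : (v,y) ∈ N.A) (hxy : x ≠ y) :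
    2 ≤ N.outDeg v := by
  have : ({(v,x), (v,y)} : Finset (ℕ × ℕ)) ⊆ N.A.filter (fun e => e.1 = v) := by
    intro e he
    rcases Finset.mem_insert.1 he with rfl | he
    · exact Finset.mem_filter.2 ⟨hx, rfl⟩
    · rw [Finset.mem_singleton.1 he]; exact Finset.mem_filter.2 ⟨hy, rfl⟩
  calc 2 = ({(v,x), (v,y)} : Finset (ℕ × ℕ)).card := by
            rw [Finset.card_insert_of_notMem (by simp [hxy]), Finset.card_singleton]
    _ ≤ _ := Finset.card_le_card this

lemma children_of_outDeg_two {v c d e : ℕ} (h : N.outDeg v = 2) (hc : (v,c) ∈ N.A)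
    (hd : (v,d) ∈ N.A) (hcd : c ≠ d) (he : (v,e) ∈ N.A) : e = c ∨ e = d := by
  have hsub : ({(v,c), (v,d)} : Finset (ℕ × ℕ)) ⊆ N.A.filter (fun e => e.1 = v) := by
    intro x hx
    rcases Finset.mem_insert.1 hx with rfl | hx
    · exact Finset.mem_filter.2 ⟨hc, rfl⟩
    · rw [Finset.mem_singleton.1 hx]; exact Finset.mem_filter.2 ⟨hd, rfl⟩
  have hcard : ({(v,c), (v,d)} : Finset (ℕ × ℕ)).card = 2 := by
    rw [Finset.card_insert_of_notMem (by simp [hcd]), Finset.card_singleton]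
  have heq := Finset.eq_of_subset_of_card_le hsub (by rw [hcard]; exact le_of_eq h)
  have : (v,e) ∈ ({(v,c), (v,d)} : Finset (ℕ × ℕ)) := by
    rw [heq]; exact Finset.mem_filter.2 ⟨he, rfl⟩
  rcases Finset.mem_insert.1 this with h' | h'
  · exact Or.inl (congrArg Prod.snd h')
  · exact Or.inr (congrArg Prod.snd (Finset.mem_singleton.1 h'))

lemma parents_of_inDeg_two {v c d e : ℕ} (h : N.inDeg v = 2) (hc : (c,v) ∈ N.A)
    (hd : (d,v) ∈ N.A) (hcd : c ≠ d) (he : (e,v) ∈ N.A) : e = c ∨ e = d := by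
  have hsub : ({(c,v), (d,v)} : Finset (ℕ × ℕ)) ⊆ N.A.filter (fun e => e.2 = v) := by
    intro x hx
    rcases Finset.mem_insert.1 hx with rfl | hx
    · exact Finset.mem_filter.2 ⟨hc, rfl⟩
    · rw [Finset.mem_singleton.1 hx]; exact Finset.mem_filter.2 ⟨hd, rfl⟩
  have hcard : ({(c,v), (d,v)} : Finset (ℕ × ℕ)).card = 2 := by
    rw [Finset.card_insert_of_notMem (by simp [hcd]), Finset.card_singleton]
  have heq := Finset.eq_of_subset_of_card_le hsub (by rw [hcard]; exact le_of_eq h)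
  have : (e,v) ∈ ({(c,v), (d,v)} : Finset (ℕ × ℕ)) := by
    rw [heq]; exact Finset.mem_filter.2 ⟨he, rfl⟩
  rcases Finset.mem_insert.1 this with h' | h'
  · exact Or.inl (congrArg Prod.fst h')
  · exact Or.inr (congrArg Prod.fst (Finset.mem_singleton.1 h'))

lemma two_children {v : ℕ} (h : N.outDeg v = 2) :
    ∃ c d, c ≠ d ∧ (v,c) ∈ N.A ∧ (v,d) ∈ N.A := by
  have h' : (N.A.filter (fun e => e.1 = v)).card = 2 := h
  have h1 : 1 < (N.A.filter (fun e => e.1 = v)).card := by omega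
  obtain ⟨e, he, f, hf, hef⟩ := Finset.one_lt_card.1 h1
  obtain ⟨heA, he1⟩ := Finset.mem_filter.1 he
  obtain ⟨hfA, hf1⟩ := Finset.mem_filter.1 hf
  refine ⟨e.2, f.2, ?_, ?_, ?_⟩
  · intro hc; apply hef; exact Prod.ext (he1.trans hf1.symm) hc
  · rwa [show (v, e.2) = e from Prod.ext he1.symm rfl]
  · rwa [show (v, f.2) = f from Prod.ext hf1.symm rfl]

lemma no_in_of_inDeg_zero {v : ℕ} (h : N.inDeg v = 0) {u : ℕ} (hu : (u,v) ∈ N.A) : False := by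
  have : (u,v) ∈ N.A.filter (fun e => e.2 = v) := Finset.mem_filter.2 ⟨hu, rfl⟩
  rw [Finset.card_eq_zero.1 h] at this
  exact absurd this (Finset.notMem_empty _)

lemma in_arc_of_reach {x y : ℕ} (hr : N.Reach x y) (hxy : x ≠ y) : ∃ w, (w,y) ∈ N.A := by
  rcases Relation.ReflTransGen.cases_tail hr with h | ⟨c, _, hc⟩
  · exact absurd h.symm hxy
  · exact ⟨c, hc⟩

end Digraph'

namespace Digraph'

variable {N N' : Digraph'} {X : Finset ℕ}

lemma leaf_inDeg (h : N.IsPhylo X) {v : ℕ} (hv : v ∈ N.V) (ho : N.outDeg v = 0) :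
    N.inDeg v = 1 := by
  rcases h.degrees v hv with ⟨h1,h2⟩|⟨h1,h2⟩|⟨h1,h2⟩|⟨h1,h2⟩ <;> omega

lemma deg_of_two_children (h : N.IsPhylo X) {v c d : ℕ} (hc : (v,c) ∈ N.A) (hd : (v,d) ∈ N.A)
    (hcd : c ≠ d) : N.outDeg v = 2 ∧ N.inDeg v ≤ 1 := by
  have h2 := two_le_outDeg hc hd hcd
  rcases h.degrees v (mem_V_fst hc) with ⟨h1',h2'⟩|⟨h1',h2'⟩|⟨h1',h2'⟩|⟨h1',h2'⟩ <;> omega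

lemma ret_outDeg (h : N.IsPhylo X) {v : ℕ} (hv : v ∈ N.V) (h2 : N.inDeg v = 2) :
    N.outDeg v = 1 := by
  rcases h.degrees v hv with ⟨h1',h2'⟩|⟨h1',h2'⟩|⟨h1',h2'⟩|⟨h1',h2'⟩ <;> omega

lemma filter_in_singleton {v x : ℕ} (h : N.inDeg v = 1) (hx : (x,v) ∈ N.A) :
    N.A.filter (fun e => e.2 = v) = {(x,v)} := by
  obtain ⟨e, he⟩ := Finset.card_eq_one.1 h
  have hxm : (x,v) ∈ N.A.filter (fun e => e.2 = v) := Finset.mem_filter.2 ⟨hx, rfl⟩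
  rw [he] at hxm ⊢
  rw [Finset.mem_singleton.1 hxm]

/-- Reducing a cherry (non-root case) preserves everything. -/
lemma reduce_all {a b p u : ℕ}
    (h : N.IsPhylo X) (hab : a ≠ b) (hpa : (p,a) ∈ N.A) (hpb : (p,b) ∈ N.A)
    (hla : N.outDeg a = 0) (hlb : N.outDeg b = 0) (hup : (u,p) ∈ N.A)
    (hV' : N'.V = (N.V.erase b).erase p)
    (hA' : N'.A = insert (u,a) (((N.A.erase (u,p)).erase (p,a)).erase (p,b))) :
    N'.IsPhylo (X.erase b) ∧ (N.TreeSibling → N'.TreeSibling) ∧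
    (N.TimeConsistent → N'.TimeConsistent) ∧ N'.V.card + 2 = N.V.card := by
  have hac := h.acyclic
  have haV : a ∈ N.V := mem_V_snd hpa
  have hbV : b ∈ N.V := mem_V_snd hpb
  have hpV : p ∈ N.V := mem_V_fst hpa
  have huV : u ∈ N.V := mem_V_fst hup
  have hina : N.inDeg a = 1 := leaf_inDeg h haV hla
  have hinb : N.inDeg b = 1 := leaf_inDeg h hbV hlb
  have hop : N.outDeg p = 2 := (deg_of_two_children h hpa hpb hab).1
  have hinp : N.inDeg p = 1 := by
    have h1 := (deg_of_two_children h hpa hpb hab).2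
    have h2 : (u,p) ∈ N.A.filter (fun e => e.2 = p) := Finset.mem_filter.2 ⟨hup, rfl⟩
    have h3 : 0 < N.inDeg p := Finset.card_pos.2 ⟨_, h2⟩
    omega
  have hpa' : p ≠ a := arc_ne hac hpa
  have hpb' : p ≠ b := arc_ne hac hpb
  have hup' : u ≠ p := arc_ne hac hup
  have hua' : u ≠ a := fun e => no_out_of_leaf hla (e ▸ hup)
  have hub' : u ≠ b := fun e => no_out_of_leaf hlb (e ▸ hup)
  have huaA : (u,a) ∉ N.A := fun hm => by
    have := two_le_inDeg hpa hm (fun e => hup' e.symm)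
    omega
  have hmemA' : ∀ e : ℕ × ℕ, e ∈ N'.A ↔
      (e = (u,a) ∨ (e ∈ N.A ∧ e ≠ (u,p) ∧ e ≠ (p,a) ∧ e ≠ (p,b))) := by
    intro e; rw [hA']
    simp only [Finset.mem_insert, Finset.mem_erase]
    tauto
  have hDin : ∀ v, v ≠ p → v ≠ b → N'.inDeg v = N.inDeg v := by
    intro v hvp hvb
    by_cases hva : v = a
    · rw [hva] at hvp hvb ⊢
      have hset : N'.A.filter (fun e => e.2 = a) = {(u,a)} := by
        ext e
        simp only [Finset.mem_filter, Finset.mem_singleton]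
        constructor
        · rintro ⟨hm, h5⟩
          rcases (hmemA' e).1 hm with rfl | ⟨h1, h2, h3, h4⟩
          · rfl
          · exfalso
            obtain ⟨x, y⟩ := e
            cases h5
            exact h3 (by rw [parent_unique hina h1 hpa])
        · rintro rfl
          exact ⟨(hmemA' _).2 (Or.inl rfl), rfl⟩
      show (N'.A.filter (fun e => e.2 = a)).card = _
      rw [hset, Finset.card_singleton, hina]
    · have hset : N'.A.filter (fun e => e.2 = v) = N.A.filter (fun e => e.2 = v) := by
        ext e
        simp only [Finset.mem_filter]
        constructor
        · rintro ⟨hm, h5⟩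
          rcases (hmemA' e).1 hm with rfl | ⟨h1, h2, h3, h4⟩
          · exact absurd h5.symm hva
          · exact ⟨h1, h5⟩
        · rintro ⟨h1, h5⟩
          refine ⟨(hmemA' e).2 (Or.inr ⟨h1, ?_, ?_, ?_⟩), h5⟩
          · intro he; subst he; exact hvp h5.symm
          · intro he; subst he; exact hva h5.symm
          · intro he; subst he; exact hvb h5.symm
      show (N'.A.filter (fun e => e.2 = v)).card = _
      rw [hset]; rfl
  have hDout : ∀ v, v ≠ p → v ≠ b → N'.outDeg v = N.outDeg v := by
    intro v hvp hvb
    by_cases hvu : v = u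
    · rw [hvu] at hvp hvb ⊢
      have hset : N'.A.filter (fun e => e.1 = u) =
          insert (u,a) ((N.A.filter (fun e => e.1 = u)).erase (u,p)) := by
        ext e
        simp only [Finset.mem_filter, Finset.mem_insert, Finset.mem_erase]
        constructor
        · rintro ⟨hm, h5⟩
          rcases (hmemA' e).1 hm with rfl | ⟨h1, h2, h3, h4⟩
          · exact Or.inl rfl
          · exact Or.inr ⟨h2, h1, h5⟩
        · rintro (rfl | ⟨h2, h1, h5⟩)
          · exact ⟨(hmemA' _).2 (Or.inl rfl), rfl⟩
          · refine ⟨(hmemA' e).2 (Or.inr ⟨h1, h2, ?_, ?_⟩), h5⟩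
            · intro he; subst he; exact hvp h5.symm
            · intro he; subst he; exact hvp h5.symm
      show (N'.A.filter (fun e => e.1 = u)).card = _
      rw [hset]
      have hmem : (u,p) ∈ N.A.filter (fun e => e.1 = u) := Finset.mem_filter.2 ⟨hup, rfl⟩
      have hnm : (u,a) ∉ (N.A.filter (fun e => e.1 = u)).erase (u,p) := by
        intro hm
        exact huaA (Finset.mem_filter.1 (Finset.mem_of_mem_erase hm)).1
      rw [Finset.card_insert_of_notMem hnm, Finset.card_erase_of_mem hmem]
      have : 0 < (N.A.filter (fun e => e.1 = u)).card := Finset.card_pos.2 ⟨_, hmem⟩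
      show _ = (N.A.filter (fun e => e.1 = u)).card
      omega
    · have hset : N'.A.filter (fun e => e.1 = v) = N.A.filter (fun e => e.1 = v) := by
        ext e
        simp only [Finset.mem_filter]
        constructor
        · rintro ⟨hm, h5⟩
          rcases (hmemA' e).1 hm with rfl | ⟨h1, h2, h3, h4⟩
          · exact absurd h5.symm hvu
          · exact ⟨h1, h5⟩
        · rintro ⟨h1, h5⟩
          refine ⟨(hmemA' e).2 (Or.inr ⟨h1, ?_, ?_, ?_⟩), h5⟩
          · intro he; subst he; exact hvu h5.symm
          · intro he; subst he; exact hvp h5.symm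
          · intro he; subst he; exact hvp h5.symm
      show (N'.A.filter (fun e => e.1 = v)).card = _
      rw [hset]; rfl
  have hVmem : ∀ v, v ∈ N'.V ↔ (v ∈ N.V ∧ v ≠ p ∧ v ≠ b) := by
    intro v; rw [hV']; simp only [Finset.mem_erase]; tauto
  have hR1 : ∀ x y, N'.Reach x y → N.Reach x y := by
    intro x y hxy
    induction hxy with
    | refl => exact Relation.ReflTransGen.refl
    | tail h1 h2 ih =>
      rcases (hmemA' _).1 h2 with he | ⟨h1', _, _, _⟩
      · simp only [Prod.mk.injEq] at he
        obtain ⟨rfl, rfl⟩ := he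
        exact ih.trans ((reach_of_arc hup).tail hpa)
      · exact ih.tail h1'
  have hacy : N'.Acyclic := by
    intro x y harc hr
    rcases (hmemA' _).1 harc with he | ⟨h1', _, _, _⟩
    · simp only [Prod.mk.injEq] at he
      obtain ⟨rfl, rfl⟩ := he
      exact hua' (reach_leaf hla (hR1 _ _ hr))
    · exact hac _ _ h1' (hR1 _ _ hr)
  have hC : ∀ y x, N.Reach x y → y ≠ p → y ≠ b → y ≠ a → x ≠ p → x ≠ b → N'.Reach x y := by
    intro y x hxy hyp hyb hya
    induction hxy using Relation.ReflTransGen.head_induction_on with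
    | refl => intro _ _; exact Relation.ReflTransGen.refl
    | @head x' z harc hr ih =>
      intro hxp hxb
      by_cases hzp : z = p
      · exfalso
        rw [hzp] at hr
        rcases Relation.ReflTransGen.cases_head hr with e | ⟨w, hw, hwy⟩
        · exact hyp e.symm
        · rcases children_of_outDeg_two hop hpa hpb hab hw with rfl | rfl
          · exact hya (reach_leaf hla hwy)
          · exact hyb (reach_leaf hlb hwy)
      · by_cases hzb : z = b
        · rw [hzb] at hr; exact absurd (reach_leaf hlb hr) hyb
        · refine Relation.ReflTransGen.head ?_ (ih hzp hzb)
          apply (hmemA' _).2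
          exact Or.inr ⟨harc, fun he => hzp (congrArg Prod.snd he),
            fun he => hxp (congrArg Prod.fst he), fun he => hxp (congrArg Prod.fst he)⟩
  obtain ⟨ρ, hρV, hρin, hρout, hρreach⟩ := h.root
  have hρp : ρ ≠ p := fun e => by rw [e, hinp] at hρin; exact one_ne_zero hρin
  have hρb : ρ ≠ b := fun e => by rw [e, hlb] at hρout; exact two_ne_zero hρout.symm
  have hreach' : ∀ v ∈ N'.V, N'.Reach ρ v := by
    intro v hv
    obtain ⟨hvV, hvp, hvb⟩ := (hVmem v).1 hv
    by_cases hva : v = a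
    · rw [hva]
      exact (hC u ρ (hρreach u huV) hup' hub' hua' hρp hρb).tail ((hmemA' _).2 (Or.inl rfl))
    · exact hC v ρ (hρreach v hvV) hvp hvb hva hρp hρb
  have haV' : a ∈ N'.V := (hVmem a).2 ⟨haV, Ne.symm hpa', hab⟩
  have hphylo : N'.IsPhylo (X.erase b) := by
    refine ⟨hacy, ?_, ?_, ?_, ?_⟩
    · intro x hx
      obtain ⟨hxb, hxX⟩ := Finset.mem_erase.1 hx
      have hxV := h.X_sub hxX
      have hxo : N.outDeg x = 0 := (h.leafSet x hxV).2 hxX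
      refine (hVmem x).2 ⟨hxV, fun e => ?_, hxb⟩
      rw [e, hop] at hxo; exact two_ne_zero hxo
    · intro v hv
      obtain ⟨hvV, hvp, hvb⟩ := (hVmem v).1 hv
      rw [hDout v hvp hvb, Finset.mem_erase]
      constructor
      · intro ho; exact ⟨hvb, (h.leafSet v hvV).1 ho⟩
      · rintro ⟨_, hX⟩; exact (h.leafSet v hvV).2 hX
    · exact ⟨ρ, (hVmem ρ).2 ⟨hρV, hρp, hρb⟩, (hDin ρ hρp hρb).trans hρin,
        (hDout ρ hρp hρb).trans hρout, hreach'⟩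
    · intro v hv
      obtain ⟨hvV, hvp, hvb⟩ := (hVmem v).1 hv
      rw [hDin v hvp hvb, hDout v hvp hvb]
      exact h.degrees v hvV
  refine ⟨hphylo, ?_, ?_, ?_⟩
  · intro hTS v hv h2
    obtain ⟨hvV, hvp, hvb⟩ := (hVmem v).1 hv
    have h2' : N.inDeg v = 2 := (hDin v hvp hvb).symm.trans h2
    have hva : v ≠ a := fun e => by rw [e, hina] at h2'; exact absurd h2' (by omega)
    obtain ⟨pr, w, hprv, hprw, hwv, hw⟩ := hTS v hvV h2'
    have hprp : pr ≠ p := by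
      intro e
      rw [e] at hprv
      rcases children_of_outDeg_two hop hpa hpb hab hprv with rfl | rfl
      · exact hva rfl
      · exact hvb rfl
    have hprvA' : (pr, v) ∈ N'.A := (hmemA' _).2 (Or.inr ⟨hprv,
      fun he => hvp (congrArg Prod.snd he), fun he => hprp (congrArg Prod.fst he),
      fun he => hprp (congrArg Prod.fst he)⟩)
    by_cases hwp : w = p
    · have hpru : pr = u := parent_unique hinp (hwp ▸ hprw) hup
      rw [hpru] at hprvA'
      refine ⟨u, a, hprvA', (hmemA' _).2 (Or.inl rfl), Ne.symm hva, Or.inr ?_⟩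
      exact ⟨haV', (hDout a (Ne.symm hpa') hab).trans hla⟩
    · have hwb : w ≠ b := by
        intro e
        rw [e] at hprw
        have : pr = p := parent_unique hinb hprw hpb
        rw [this] at hprv
        rcases children_of_outDeg_two hop hpa hpb hab hprv with rfl | rfl
        · exact hva rfl
        · exact hvb rfl
      have hprwA' : (pr, w) ∈ N'.A := (hmemA' _).2 (Or.inr ⟨hprw,
        fun he => hwp (congrArg Prod.snd he), fun he => hprp (congrArg Prod.fst he),
        fun he => hprp (congrArg Prod.fst he)⟩)
      refine ⟨pr, w, hprvA', hprwA', hwv, ?_⟩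
      rcases hw with ⟨hwV, hw1, hw2⟩ | ⟨hwV, hw1⟩
      · exact Or.inl ⟨(hVmem w).2 ⟨hwV, hwp, hwb⟩, (hDin w hwp hwb).trans hw1,
          (hDout w hwp hwb).trans hw2⟩
      · exact Or.inr ⟨(hVmem w).2 ⟨hwV, hwp, hwb⟩, (hDout w hwp hwb).trans hw1⟩
  · rintro ⟨t, ht⟩
    refine ⟨t, ?_⟩
    intro x y harc
    have hyV' : y ∈ N'.V := (N'.mem_V _ harc).2
    obtain ⟨hyV, hyp, hyb⟩ := (hVmem y).1 hyV'
    have hdy : N'.inDeg y = N.inDeg y := hDin y hyp hyb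
    rcases (hmemA' _).1 harc with he | ⟨h1', _, _, _⟩
    · simp only [Prod.mk.injEq] at he
      obtain ⟨e1, e2⟩ := he
      rw [e2] at hdy
      rw [e1, e2, hdy, hina]
      refine ⟨fun h2 => absurd h2 (by omega), fun _ => ?_⟩
      have l1 := (ht u p hup).2 (by omega)
      have l2 := (ht p a hpa).2 (by omega)
      exact l1.trans l2
    · rw [hdy]
      exact ht x y h1'
  · rw [hV', Finset.card_erase_of_mem (Finset.mem_erase.2 ⟨hpb', hpV⟩),
      Finset.card_erase_of_mem hbV]
    have h2 : 1 < N.V.card := Finset.one_lt_card.2 ⟨p, hpV, b, hbV, hpb'⟩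
    omega

/-- Existence of the reduced network for a cherry with non-root parent. -/
lemma reduce_exists {a b p u : ℕ}
    (h : N.IsPhylo X) (hab : a ≠ b) (hpa : (p,a) ∈ N.A) (hpb : (p,b) ∈ N.A)
    (hla : N.outDeg a = 0) (hlb : N.outDeg b = 0) (hup : (u,p) ∈ N.A) :
    ∃ N' : Digraph', N'.V = (N.V.erase b).erase p ∧
      N'.A = insert (u,a) (((N.A.erase (u,p)).erase (p,a)).erase (p,b)) := by
  have hac := h.acyclic
  have haV : a ∈ N.V := mem_V_snd hpa
  have hbV : b ∈ N.V := mem_V_snd hpb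
  have hpV : p ∈ N.V := mem_V_fst hpa
  have huV : u ∈ N.V := mem_V_fst hup
  have hina : N.inDeg a = 1 := leaf_inDeg h haV hla
  have hinb : N.inDeg b = 1 := leaf_inDeg h hbV hlb
  have hop : N.outDeg p = 2 := (deg_of_two_children h hpa hpb hab).1
  have hinp : N.inDeg p = 1 := by
    have h1 := (deg_of_two_children h hpa hpb hab).2
    have h2 : (u,p) ∈ N.A.filter (fun e => e.2 = p) := Finset.mem_filter.2 ⟨hup, rfl⟩
    have h3 : 0 < N.inDeg p := Finset.card_pos.2 ⟨_, h2⟩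
    omega
  have hpa' : p ≠ a := arc_ne hac hpa
  have hpb' : p ≠ b := arc_ne hac hpb
  have hup' : u ≠ p := arc_ne hac hup
  have hua' : u ≠ a := fun e => no_out_of_leaf hla (e ▸ hup)
  have hub' : u ≠ b := fun e => no_out_of_leaf hlb (e ▸ hup)
  refine ⟨⟨(N.V.erase b).erase p, insert (u,a) (((N.A.erase (u,p)).erase (p,a)).erase (p,b)),
    ?_⟩, rfl, rfl⟩
  intro e he
  simp only [Finset.mem_insert, Finset.mem_erase] at he
  rcases he with rfl | ⟨hne_pb, hne_pa, hne_up, heA⟩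
  · constructor
    · exact Finset.mem_erase.2 ⟨hup', Finset.mem_erase.2 ⟨hub', huV⟩⟩
    · exact Finset.mem_erase.2 ⟨Ne.symm hpa', Finset.mem_erase.2 ⟨hab, haV⟩⟩
  · obtain ⟨x, y⟩ := e
    have hxV := mem_V_fst heA
    have hyV := mem_V_snd heA
    constructor
    · refine Finset.mem_erase.2 ⟨?_, Finset.mem_erase.2 ⟨?_, hxV⟩⟩
      · intro e1
        replace e1 : x = p := e1
        rw [e1] at heA
        rcases children_of_outDeg_two hop hpa hpb hab heA with hy | hy
        · exact hne_pa (by rw [e1, hy])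
        · exact hne_pb (by rw [e1, hy])
      · intro e1
        replace e1 : x = b := e1
        rw [e1] at heA
        exact no_out_of_leaf hlb heA
    · refine Finset.mem_erase.2 ⟨?_, Finset.mem_erase.2 ⟨?_, hyV⟩⟩
      · intro e1
        replace e1 : y = p := e1
        rw [e1] at heA
        have hx : x = u := parent_unique hinp heA hup
        exact hne_up (by rw [e1, hx])
      · intro e1
        replace e1 : y = b := e1
        rw [e1] at heA
        have hx : x = p := parent_unique hinb heA hpb
        exact hne_pb (by rw [e1, hx])

end Digraph'

namespace Digraph'

variable {N N' : Digraph'} {X : Finset ℕ}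

/-- Cutting a reticulated cherry preserves everything. -/
lemma cut_all {a b pa pb ua q : ℕ}
    (h : N.IsPhylo X) (hab : a ≠ b) (hpaa : (pa,a) ∈ N.A) (hpbb : (pb,b) ∈ N.A)
    (hinpb : N.inDeg pb = 2) (hpapb : (pa,pb) ∈ N.A) (huapa : (ua,pa) ∈ N.A)
    (hqpb : (q,pb) ∈ N.A) (hqpa : q ≠ pa)
    (hla : N.outDeg a = 0) (hlb : N.outDeg b = 0)
    (hV' : N'.V = (N.V.erase pa).erase pb)
    (hA' : N'.A = insert (ua,a) (insert (q,b)
      (((((N.A.erase (pa,pb)).erase (ua,pa)).erase (pa,a)).erase (q,pb)).erase (pb,b)))) :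
    N'.IsPhylo X ∧ (N.TreeSibling → N'.TreeSibling) ∧
    (N.TimeConsistent → N'.TimeConsistent) ∧ N'.V.card + 2 = N.V.card := by
  have hac := h.acyclic
  have haV : a ∈ N.V := mem_V_snd hpaa
  have hbV : b ∈ N.V := mem_V_snd hpbb
  have hpaV : pa ∈ N.V := mem_V_fst hpaa
  have hpbV : pb ∈ N.V := mem_V_fst hpbb
  have huaV : ua ∈ N.V := mem_V_fst huapa
  have hqV : q ∈ N.V := mem_V_fst hqpb
  have hina : N.inDeg a = 1 := leaf_inDeg h haV hla
  have hinb : N.inDeg b = 1 := leaf_inDeg h hbV hlb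
  have hopb : N.outDeg pb = 1 := ret_outDeg h hpbV hinpb
  have hapb : a ≠ pb := fun e => no_out_of_leaf hla (e ▸ hpbb)
  have hopa : N.outDeg pa = 2 := (deg_of_two_children h hpaa hpapb hapb).1
  have hinpa : N.inDeg pa = 1 := by
    have h1 := (deg_of_two_children h hpaa hpapb hapb).2
    have h2 : (ua,pa) ∈ N.A.filter (fun e => e.2 = pa) := Finset.mem_filter.2 ⟨huapa, rfl⟩
    have h3 : 0 < N.inDeg pa := Finset.card_pos.2 ⟨_, h2⟩
    omega
  have hpaa' : pa ≠ a := arc_ne hac hpaa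
  have hpapb' : pa ≠ pb := arc_ne hac hpapb
  have hpbb' : pb ≠ b := arc_ne hac hpbb
  have huapa' : ua ≠ pa := arc_ne hac huapa
  have hqpb' : q ≠ pb := arc_ne hac hqpb
  have hpab : pa ≠ b := fun e => no_out_of_leaf (e ▸ hlb) hpaa
  have huaa : ua ≠ a := fun e => no_out_of_leaf hla (e ▸ huapa)
  have huab : ua ≠ b := fun e => no_out_of_leaf hlb (e ▸ huapa)
  have hqa : q ≠ a := fun e => no_out_of_leaf hla (e ▸ hqpb)
  have hqb : q ≠ b := fun e => no_out_of_leaf hlb (e ▸ hqpb)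
  have huapb : ua ≠ pb := fun e => hac pa pb hpapb (reach_of_arc (e ▸ huapa))
  have huaaA : (ua,a) ∉ N.A := fun hm => by
    have := two_le_inDeg hpaa hm (fun e => huapa' e.symm)
    omega
  have hqbA : (q,b) ∉ N.A := fun hm => by
    have := two_le_inDeg hpbb hm (fun e => hqpb' e.symm)
    omega
  have hmemA' : ∀ e : ℕ × ℕ, e ∈ N'.A ↔
      (e = (ua,a) ∨ e = (q,b) ∨ (e ∈ N.A ∧ e ≠ (pa,pb) ∧ e ≠ (ua,pa) ∧ e ≠ (pa,a) ∧
        e ≠ (q,pb) ∧ e ≠ (pb,b))) := by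
    intro e; rw [hA']
    simp only [Finset.mem_insert, Finset.mem_erase]
    tauto
  have hDin : ∀ v, v ≠ pa → v ≠ pb → N'.inDeg v = N.inDeg v := by
    intro v hvpa hvpb
    by_cases hva : v = a
    · rw [hva] at hvpa hvpb ⊢
      have hset : N'.A.filter (fun e => e.2 = a) = {(ua,a)} := by
        ext e
        simp only [Finset.mem_filter, Finset.mem_singleton]
        constructor
        · rintro ⟨hm, h5⟩
          rcases (hmemA' e).1 hm with rfl | rfl | ⟨h1, h2, h3, h4, h5', h6⟩
          · rfl
          · exact absurd h5.symm hab
          · exfalso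
            obtain ⟨x, y⟩ := e
            cases h5
            exact h4 (by rw [parent_unique hina h1 hpaa])
        · rintro rfl
          exact ⟨(hmemA' _).2 (Or.inl rfl), rfl⟩
      show (N'.A.filter (fun e => e.2 = a)).card = _
      rw [hset, Finset.card_singleton, hina]
    · by_cases hvb : v = b
      · rw [hvb] at hvpa hvpb ⊢
        have hset : N'.A.filter (fun e => e.2 = b) = {(q,b)} := by
          ext e
          simp only [Finset.mem_filter, Finset.mem_singleton]
          constructor
          · rintro ⟨hm, h5⟩
            rcases (hmemA' e).1 hm with rfl | rfl | ⟨h1, h2, h3, h4, h5', h6⟩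
            · exact absurd h5 hab
            · rfl
            · exfalso
              obtain ⟨x, y⟩ := e
              cases h5
              exact h6 (by rw [parent_unique hinb h1 hpbb])
          · rintro rfl
            exact ⟨(hmemA' _).2 (Or.inr (Or.inl rfl)), rfl⟩
        show (N'.A.filter (fun e => e.2 = b)).card = _
        rw [hset, Finset.card_singleton, hinb]
      · have hset : N'.A.filter (fun e => e.2 = v) = N.A.filter (fun e => e.2 = v) := by
          ext e
          simp only [Finset.mem_filter]
          constructor
          · rintro ⟨hm, h5⟩
            rcases (hmemA' e).1 hm with rfl | rfl | ⟨h1, _, _, _, _, _⟩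
            · exact absurd h5.symm hva
            · exact absurd h5.symm hvb
            · exact ⟨h1, h5⟩
          · rintro ⟨h1, h5⟩
            refine ⟨(hmemA' e).2 (Or.inr (Or.inr ⟨h1, ?_, ?_, ?_, ?_, ?_⟩)), h5⟩
            · intro he; subst he; exact hvpb h5.symm
            · intro he; subst he; exact hvpa h5.symm
            · intro he; subst he; exact hva h5.symm
            · intro he; subst he; exact hvpb h5.symm
            · intro he; subst he; exact hvb h5.symm
        show (N'.A.filter (fun e => e.2 = v)).card = _
        rw [hset]; rfl
  have hDout : ∀ v, v ≠ pa → v ≠ pb → N'.outDeg v = N.outDeg v := by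
    intro v hvpa hvpb
    by_cases hvua : v = ua
    · rw [hvua] at hvpa hvpb ⊢
      by_cases hqua : q = ua
      · have hset : N'.A.filter (fun e => e.1 = ua) = insert (ua,a) (insert (ua,b)
            (((N.A.filter (fun e => e.1 = ua)).erase (ua,pa)).erase (ua,pb))) := by
          ext e
          simp only [Finset.mem_filter, Finset.mem_insert, Finset.mem_erase]
          constructor
          · rintro ⟨hm, h5⟩
            rcases (hmemA' e).1 hm with rfl | rfl | ⟨h1, h2, h3, h4, h5', h6⟩
            · exact Or.inl rfl
            · exact Or.inr (Or.inl (by rw [hqua]))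
            · refine Or.inr (Or.inr ⟨?_, ?_, h1, h5⟩)
              · intro he; rw [he, ← hqua] at h5'; exact h5' rfl
              · exact h3
          · rintro (rfl | rfl | ⟨hne1, hne2, h1, h5⟩)
            · exact ⟨(hmemA' _).2 (Or.inl rfl), rfl⟩
            · exact ⟨(hmemA' _).2 (Or.inr (Or.inl (by rw [hqua]))), rfl⟩
            · refine ⟨(hmemA' e).2 (Or.inr (Or.inr ⟨h1, ?_, hne2, ?_, ?_, ?_⟩)), h5⟩
              · intro he; rw [he] at h5; exact hvpa h5.symm
              · intro he; rw [he] at h5; exact hvpa h5.symm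
              · intro he; rw [hqua] at he; exact hne1 he
              · intro he; rw [he] at h5; exact hvpb h5.symm
        show (N'.A.filter (fun e => e.1 = ua)).card = _
        rw [hset]
        have hm1 : (ua,pa) ∈ N.A.filter (fun e => e.1 = ua) := Finset.mem_filter.2 ⟨huapa, rfl⟩
        have hm2 : (ua,pb) ∈ (N.A.filter (fun e => e.1 = ua)).erase (ua,pa) := by
          refine Finset.mem_erase.2 ⟨?_, Finset.mem_filter.2 ⟨hqua ▸ hqpb, rfl⟩⟩
          intro he
          exact hpapb' (congrArg Prod.snd he).symm
        have hn2 : (ua,b) ∉ ((N.A.filter (fun e => e.1 = ua)).erase (ua,pa)).erase (ua,pb) := by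
          intro hm
          exact hqbA (hqua ▸ (Finset.mem_filter.1
            (Finset.mem_of_mem_erase (Finset.mem_of_mem_erase hm))).1)
        have hn1 : (ua,a) ∉ insert (ua,b)
            (((N.A.filter (fun e => e.1 = ua)).erase (ua,pa)).erase (ua,pb)) := by
          intro hm
          rcases Finset.mem_insert.1 hm with he | hm'
          · exact hab (congrArg Prod.snd he)
          · exact huaaA (Finset.mem_filter.1
              (Finset.mem_of_mem_erase (Finset.mem_of_mem_erase hm'))).1
        rw [Finset.card_insert_of_notMem hn1, Finset.card_insert_of_notMem hn2,
          Finset.card_erase_of_mem hm2, Finset.card_erase_of_mem hm1]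
        have c1 : 0 < (N.A.filter (fun e => e.1 = ua)).card := Finset.card_pos.2 ⟨_, hm1⟩
        have c2 : 0 < ((N.A.filter (fun e => e.1 = ua)).erase (ua,pa)).card :=
          Finset.card_pos.2 ⟨_, hm2⟩
        rw [Finset.card_erase_of_mem hm1] at c2
        show _ = (N.A.filter (fun e => e.1 = ua)).card
        omega
      · have hset : N'.A.filter (fun e => e.1 = ua) =
            insert (ua,a) ((N.A.filter (fun e => e.1 = ua)).erase (ua,pa)) := by
          ext e
          simp only [Finset.mem_filter, Finset.mem_insert, Finset.mem_erase]
          constructor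
          · rintro ⟨hm, h5⟩
            rcases (hmemA' e).1 hm with rfl | rfl | ⟨h1, h2, h3, h4, h5', h6⟩
            · exact Or.inl rfl
            · exact absurd h5 hqua
            · exact Or.inr ⟨h3, h1, h5⟩
          · rintro (rfl | ⟨hne2, h1, h5⟩)
            · exact ⟨(hmemA' _).2 (Or.inl rfl), rfl⟩
            · refine ⟨(hmemA' e).2 (Or.inr (Or.inr ⟨h1, ?_, hne2, ?_, ?_, ?_⟩)), h5⟩
              · intro he; rw [he] at h5; exact hvpa h5.symm
              · intro he; rw [he] at h5; exact hvpa h5.symm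
              · intro he; rw [he] at h5; exact hqua h5
              · intro he; rw [he] at h5; exact hvpb h5.symm
        show (N'.A.filter (fun e => e.1 = ua)).card = _
        rw [hset]
        have hm1 : (ua,pa) ∈ N.A.filter (fun e => e.1 = ua) := Finset.mem_filter.2 ⟨huapa, rfl⟩
        have hn1 : (ua,a) ∉ (N.A.filter (fun e => e.1 = ua)).erase (ua,pa) := by
          intro hm
          exact huaaA (Finset.mem_filter.1 (Finset.mem_of_mem_erase hm)).1
        rw [Finset.card_insert_of_notMem hn1, Finset.card_erase_of_mem hm1]
        have c1 : 0 < (N.A.filter (fun e => e.1 = ua)).card := Finset.card_pos.2 ⟨_, hm1⟩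
        show _ = (N.A.filter (fun e => e.1 = ua)).card
        omega
    · by_cases hvq : v = q
      · rw [hvq] at hvpa hvpb hvua ⊢
        have hset : N'.A.filter (fun e => e.1 = q) =
            insert (q,b) ((N.A.filter (fun e => e.1 = q)).erase (q,pb)) := by
          ext e
          simp only [Finset.mem_filter, Finset.mem_insert, Finset.mem_erase]
          constructor
          · rintro ⟨hm, h5⟩
            rcases (hmemA' e).1 hm with rfl | rfl | ⟨h1, h2, h3, h4, h5', h6⟩
            · exact absurd h5 (fun e => hvua e.symm)
            · exact Or.inl rfl
            · exact Or.inr ⟨h5', h1, h5⟩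
          · rintro (rfl | ⟨hne2, h1, h5⟩)
            · exact ⟨(hmemA' _).2 (Or.inr (Or.inl rfl)), rfl⟩
            · refine ⟨(hmemA' e).2 (Or.inr (Or.inr ⟨h1, ?_, ?_, ?_, hne2, ?_⟩)), h5⟩
              · intro he; rw [he] at h5; exact hvpa h5.symm
              · intro he; rw [he] at h5; exact hvua h5.symm
              · intro he; rw [he] at h5; exact hvpa h5.symm
              · intro he; rw [he] at h5; exact hvpb h5.symm
        show (N'.A.filter (fun e => e.1 = q)).card = _
        rw [hset]
        have hm1 : (q,pb) ∈ N.A.filter (fun e => e.1 = q) := Finset.mem_filter.2 ⟨hqpb, rfl⟩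
        have hn1 : (q,b) ∉ (N.A.filter (fun e => e.1 = q)).erase (q,pb) := by
          intro hm
          exact hqbA (Finset.mem_filter.1 (Finset.mem_of_mem_erase hm)).1
        rw [Finset.card_insert_of_notMem hn1, Finset.card_erase_of_mem hm1]
        have c1 : 0 < (N.A.filter (fun e => e.1 = q)).card := Finset.card_pos.2 ⟨_, hm1⟩
        show _ = (N.A.filter (fun e => e.1 = q)).card
        omega
      · have hset : N'.A.filter (fun e => e.1 = v) = N.A.filter (fun e => e.1 = v) := by
          ext e
          simp only [Finset.mem_filter]
          constructor
          · rintro ⟨hm, h5⟩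
            rcases (hmemA' e).1 hm with rfl | rfl | ⟨h1, _, _, _, _, _⟩
            · exact absurd h5.symm hvua
            · exact absurd h5.symm hvq
            · exact ⟨h1, h5⟩
          · rintro ⟨h1, h5⟩
            refine ⟨(hmemA' e).2 (Or.inr (Or.inr ⟨h1, ?_, ?_, ?_, ?_, ?_⟩)), h5⟩
            · intro he; rw [he] at h5; exact hvpa h5.symm
            · intro he; rw [he] at h5; exact hvua h5.symm
            · intro he; rw [he] at h5; exact hvpa h5.symm
            · intro he; rw [he] at h5; exact hvq h5.symm
            · intro he; rw [he] at h5; exact hvpb h5.symm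
        show (N'.A.filter (fun e => e.1 = v)).card = _
        rw [hset]; rfl
  have hVmem : ∀ v, v ∈ N'.V ↔ (v ∈ N.V ∧ v ≠ pa ∧ v ≠ pb) := by
    intro v; rw [hV']; simp only [Finset.mem_erase]; tauto
  have hR1 : ∀ x y, N'.Reach x y → N.Reach x y := by
    intro x y hxy
    induction hxy with
    | refl => exact Relation.ReflTransGen.refl
    | tail h1 h2 ih =>
      rcases (hmemA' _).1 h2 with he | he | ⟨h1', _, _, _, _, _⟩
      · simp only [Prod.mk.injEq] at he
        obtain ⟨e1, e2⟩ := he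
        rw [e2]
        rw [e1] at ih
        exact ih.trans ((reach_of_arc huapa).tail hpaa)
      · simp only [Prod.mk.injEq] at he
        obtain ⟨e1, e2⟩ := he
        rw [e2]
        rw [e1] at ih
        exact ih.trans ((reach_of_arc hqpb).tail hpbb)
      · exact ih.tail h1'
  have hacy : N'.Acyclic := by
    intro x y harc hr
    rcases (hmemA' _).1 harc with he | he | ⟨h1', _, _, _, _, _⟩
    · simp only [Prod.mk.injEq] at he
      obtain ⟨e1, e2⟩ := he
      rw [e1, e2] at hr
      exact huaa (reach_leaf hla (hR1 _ _ hr))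
    · simp only [Prod.mk.injEq] at he
      obtain ⟨e1, e2⟩ := he
      rw [e1, e2] at hr
      exact hqb (reach_leaf hlb (hR1 _ _ hr))
    · exact hac _ _ h1' (hR1 _ _ hr)
  have hC : ∀ y x, N.Reach x y → y ≠ pa → y ≠ pb → y ≠ a → y ≠ b → x ≠ pa → x ≠ pb →
      N'.Reach x y := by
    intro y x hxy hypa hypb hya hyb
    induction hxy using Relation.ReflTransGen.head_induction_on with
    | refl => intro _ _; exact Relation.ReflTransGen.refl
    | @head x' z harc hr ih =>
      intro hxpa hxpb
      by_cases hzpa : z = pa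
      · exfalso
        rw [hzpa] at hr
        rcases Relation.ReflTransGen.cases_head hr with e | ⟨w, hw, hwy⟩
        · exact hypa e.symm
        · rcases children_of_outDeg_two hopa hpaa hpapb hapb hw with hw1 | hw1
          · rw [hw1] at hwy; exact hya (reach_leaf hla hwy)
          · rw [hw1] at hwy
            rcases Relation.ReflTransGen.cases_head hwy with e | ⟨w2, hw2, h2y⟩
            · exact hypb e.symm
            · rw [child_unique hopb hw2 hpbb] at h2y
              exact hyb (reach_leaf hlb h2y)
      · by_cases hzpb : z = pb
        · exfalso
          rw [hzpb] at hr
          rcases Relation.ReflTransGen.cases_head hr with e | ⟨w2, hw2, h2y⟩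
          · exact hypb e.symm
          · rw [child_unique hopb hw2 hpbb] at h2y
            exact hyb (reach_leaf hlb h2y)
        · refine Relation.ReflTransGen.head ?_ (ih hzpa hzpb)
          apply (hmemA' _).2
          refine Or.inr (Or.inr ⟨harc, fun he => hzpb (congrArg Prod.snd he),
            fun he => hzpa (congrArg Prod.snd he), fun he => hxpa (congrArg Prod.fst he),
            fun he => hzpb (congrArg Prod.snd he), fun he => hxpb (congrArg Prod.fst he)⟩)
  obtain ⟨ρ, hρV, hρin, hρout, hρreach⟩ := h.root
  have hρpa : ρ ≠ pa := fun e => by rw [e, hinpa] at hρin; exact one_ne_zero hρin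
  have hρpb : ρ ≠ pb := fun e => by rw [e, hinpb] at hρin; exact two_ne_zero hρin
  have hreach' : ∀ v ∈ N'.V, N'.Reach ρ v := by
    intro v hv
    obtain ⟨hvV, hvpa, hvpb⟩ := (hVmem v).1 hv
    by_cases hva : v = a
    · rw [hva]
      exact (hC ua ρ (hρreach ua huaV) huapa' huapb huaa huab hρpa hρpb).tail
        ((hmemA' _).2 (Or.inl rfl))
    · by_cases hvb : v = b
      · rw [hvb]
        exact (hC q ρ (hρreach q hqV) hqpa hqpb' hqa hqb hρpa hρpb).tail
          ((hmemA' _).2 (Or.inr (Or.inl rfl)))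
      · exact hC v ρ (hρreach v hvV) hvpa hvpb hva hvb hρpa hρpb
  have haV' : a ∈ N'.V := (hVmem a).2 ⟨haV, Ne.symm hpaa', hapb⟩
  have hphylo : N'.IsPhylo X := by
    refine ⟨hacy, ?_, ?_, ?_, ?_⟩
    · intro x hx
      have hxV := h.X_sub hx
      have hxo : N.outDeg x = 0 := (h.leafSet x hxV).2 hx
      refine (hVmem x).2 ⟨hxV, fun e => ?_, fun e => ?_⟩
      · rw [e, hopa] at hxo; exact two_ne_zero hxo
      · rw [e, hopb] at hxo; exact one_ne_zero hxo
    · intro v hv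
      obtain ⟨hvV, hvpa, hvpb⟩ := (hVmem v).1 hv
      rw [hDout v hvpa hvpb]
      exact h.leafSet v hvV
    · exact ⟨ρ, (hVmem ρ).2 ⟨hρV, hρpa, hρpb⟩, (hDin ρ hρpa hρpb).trans hρin,
        (hDout ρ hρpa hρpb).trans hρout, hreach'⟩
    · intro v hv
      obtain ⟨hvV, hvpa, hvpb⟩ := (hVmem v).1 hv
      rw [hDin v hvpa hvpb, hDout v hvpa hvpb]
      exact h.degrees v hvV
  refine ⟨hphylo, ?_, ?_, ?_⟩
  · intro hTS v hv h2
    obtain ⟨hvV, hvpa, hvpb⟩ := (hVmem v).1 hv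
    have h2' : N.inDeg v = 2 := (hDin v hvpa hvpb).symm.trans h2
    have hva : v ≠ a := fun e => by rw [e, hina] at h2'; exact absurd h2' (by omega)
    have hvb : v ≠ b := fun e => by rw [e, hinb] at h2'; exact absurd h2' (by omega)
    obtain ⟨pr, w, hprv, hprw, hwv, hw⟩ := hTS v hvV h2'
    have hprpa : pr ≠ pa := by
      intro e
      rw [e] at hprv
      rcases children_of_outDeg_two hopa hpaa hpapb hapb hprv with hw1 | hw1
      · exact hva hw1
      · exact hvpb hw1
    have hprpb : pr ≠ pb := by
      intro e
      rw [e] at hprv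
      exact hvb (child_unique hopb hprv hpbb)
    have hprvA' : (pr, v) ∈ N'.A := (hmemA' _).2 (Or.inr (Or.inr ⟨hprv,
      fun he => hvpb (congrArg Prod.snd he), fun he => hvpa (congrArg Prod.snd he),
      fun he => hprpa (congrArg Prod.fst he), fun he => hvpb (congrArg Prod.snd he),
      fun he => hprpb (congrArg Prod.fst he)⟩))
    by_cases hwpa : w = pa
    · have hpru : pr = ua := parent_unique hinpa (hwpa ▸ hprw) huapa
      rw [hpru] at hprvA'
      refine ⟨ua, a, hprvA', (hmemA' _).2 (Or.inl rfl), Ne.symm hva, Or.inr ?_⟩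
      exact ⟨haV', (hDout a (Ne.symm hpaa') hapb).trans hla⟩
    · have hwpb : w ≠ pb := by
        intro e
        rw [e] at hprw hw
        rcases parents_of_inDeg_two hinpb hpapb hqpb (fun e' => hqpa e'.symm) hprw with e' | e'
        · exact hprpa e'
        · rcases hw with ⟨_, hw1, _⟩ | ⟨_, hw1⟩
          · rw [hinpb] at hw1; exact absurd hw1 (by omega)
          · rw [hopb] at hw1; exact absurd hw1 (by omega)
      have hwb' : w ≠ b := by
        intro e
        rw [e] at hprw
        exact hprpb (parent_unique hinb hprw hpbb)
      have hprwA' : (pr, w) ∈ N'.A := (hmemA' _).2 (Or.inr (Or.inr ⟨hprw,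
        fun he => hwpb (congrArg Prod.snd he), fun he => hwpa (congrArg Prod.snd he),
        fun he => hprpa (congrArg Prod.fst he), fun he => hwpb (congrArg Prod.snd he),
        fun he => hprpb (congrArg Prod.fst he)⟩))
      refine ⟨pr, w, hprvA', hprwA', hwv, ?_⟩
      rcases hw with ⟨hwV, hw1, hw2⟩ | ⟨hwV, hw1⟩
      · exact Or.inl ⟨(hVmem w).2 ⟨hwV, hwpa, hwpb⟩, (hDin w hwpa hwpb).trans hw1,
          (hDout w hwpa hwpb).trans hw2⟩
      · exact Or.inr ⟨(hVmem w).2 ⟨hwV, hwpa, hwpb⟩, (hDout w hwpa hwpb).trans hw1⟩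
  · rintro ⟨t, ht⟩
    refine ⟨t, ?_⟩
    intro x y harc
    have hyV' : y ∈ N'.V := (N'.mem_V _ harc).2
    obtain ⟨hyV, hypa, hypb⟩ := (hVmem y).1 hyV'
    have hdy : N'.inDeg y = N.inDeg y := hDin y hypa hypb
    rcases (hmemA' _).1 harc with he | he | ⟨h1', _, _, _, _, _⟩
    · simp only [Prod.mk.injEq] at he
      obtain ⟨e1, e2⟩ := he
      rw [e2] at hdy
      rw [e1, e2, hdy, hina]
      refine ⟨fun h2 => absurd h2 (by omega), fun _ => ?_⟩
      have l1 := (ht ua pa huapa).2 (by omega)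
      have l2 := (ht pa a hpaa).2 (by omega)
      exact l1.trans l2
    · simp only [Prod.mk.injEq] at he
      obtain ⟨e1, e2⟩ := he
      rw [e2] at hdy
      rw [e1, e2, hdy, hinb]
      refine ⟨fun h2 => absurd h2 (by omega), fun _ => ?_⟩
      have l1 := (ht q pb hqpb).1 hinpb
      have l2 := (ht pb b hpbb).2 (by omega)
      rw [l1]
      exact l2
    · rw [hdy]
      exact ht x y h1'
  · rw [hV', Finset.card_erase_of_mem (Finset.mem_erase.2 ⟨Ne.symm hpapb', hpbV⟩),
      Finset.card_erase_of_mem hpaV]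
    have h2 : 1 < N.V.card := Finset.one_lt_card.2 ⟨pa, hpaV, pb, hpbV, hpapb'⟩
    omega

/-- Existence of the cut network. -/
lemma cut_exists {a b pa pb ua q : ℕ}
    (h : N.IsPhylo X) (hab : a ≠ b) (hpaa : (pa,a) ∈ N.A) (hpbb : (pb,b) ∈ N.A)
    (hinpb : N.inDeg pb = 2) (hpapb : (pa,pb) ∈ N.A) (huapa : (ua,pa) ∈ N.A)
    (hqpb : (q,pb) ∈ N.A) (hqpa : q ≠ pa)
    (hla : N.outDeg a = 0) (hlb : N.outDeg b = 0) :
    ∃ N' : Digraph', N'.V = (N.V.erase pa).erase pb ∧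
      N'.A = insert (ua,a) (insert (q,b)
      (((((N.A.erase (pa,pb)).erase (ua,pa)).erase (pa,a)).erase (q,pb)).erase (pb,b))) := by
  have hac := h.acyclic
  have haV : a ∈ N.V := mem_V_snd hpaa
  have hbV : b ∈ N.V := mem_V_snd hpbb
  have hpaV : pa ∈ N.V := mem_V_fst hpaa
  have hpbV : pb ∈ N.V := mem_V_fst hpbb
  have huaV : ua ∈ N.V := mem_V_fst huapa
  have hqV : q ∈ N.V := mem_V_fst hqpb
  have hina : N.inDeg a = 1 := leaf_inDeg h haV hla
  have hinb : N.inDeg b = 1 := leaf_inDeg h hbV hlb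
  have hopb : N.outDeg pb = 1 := ret_outDeg h hpbV hinpb
  have hapb : a ≠ pb := fun e => no_out_of_leaf hla (e ▸ hpbb)
  have hopa : N.outDeg pa = 2 := (deg_of_two_children h hpaa hpapb hapb).1
  have hinpa : N.inDeg pa = 1 := by
    have h1 := (deg_of_two_children h hpaa hpapb hapb).2
    have h2 : (ua,pa) ∈ N.A.filter (fun e => e.2 = pa) := Finset.mem_filter.2 ⟨huapa, rfl⟩
    have h3 : 0 < N.inDeg pa := Finset.card_pos.2 ⟨_, h2⟩
    omega
  have hpaa' : pa ≠ a := arc_ne hac hpaa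
  have hpapb' : pa ≠ pb := arc_ne hac hpapb
  have hpbb' : pb ≠ b := arc_ne hac hpbb
  have huapa' : ua ≠ pa := arc_ne hac huapa
  have hqpb' : q ≠ pb := arc_ne hac hqpb
  have hpab : pa ≠ b := fun e => no_out_of_leaf (e ▸ hlb) hpaa
  have huaa : ua ≠ a := fun e => no_out_of_leaf hla (e ▸ huapa)
  have huab : ua ≠ b := fun e => no_out_of_leaf hlb (e ▸ huapa)
  have hqa : q ≠ a := fun e => no_out_of_leaf hla (e ▸ hqpb)
  have hqb : q ≠ b := fun e => no_out_of_leaf hlb (e ▸ hqpb)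
  have huapb : ua ≠ pb := fun e => hac pa pb hpapb (reach_of_arc (e ▸ huapa))
  refine ⟨⟨(N.V.erase pa).erase pb, _, ?_⟩, rfl, rfl⟩
  intro e he
  simp only [Finset.mem_insert, Finset.mem_erase] at he
  rcases he with rfl | rfl | ⟨hne_pbb, hne_qpb, hne_paa, hne_uapa, hne_papb, heA⟩
  · constructor
    · exact Finset.mem_erase.2 ⟨huapb, Finset.mem_erase.2 ⟨huapa', huaV⟩⟩
    · exact Finset.mem_erase.2 ⟨hapb, Finset.mem_erase.2 ⟨Ne.symm hpaa', haV⟩⟩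
  · constructor
    · exact Finset.mem_erase.2 ⟨hqpb', Finset.mem_erase.2 ⟨hqpa, hqV⟩⟩
    · exact Finset.mem_erase.2 ⟨Ne.symm hpbb', Finset.mem_erase.2 ⟨Ne.symm hpab, hbV⟩⟩
  · obtain ⟨x, y⟩ := e
    have hxV := mem_V_fst heA
    have hyV := mem_V_snd heA
    constructor
    · refine Finset.mem_erase.2 ⟨?_, Finset.mem_erase.2 ⟨?_, hxV⟩⟩
      · intro e1
        replace e1 : x = pb := e1
        rw [e1] at heA
        have := child_unique hopb heA hpbb
        exact hne_pbb (by rw [e1, this])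
      · intro e1
        replace e1 : x = pa := e1
        rw [e1] at heA
        rcases children_of_outDeg_two hopa hpaa hpapb hapb heA with hy | hy
        · exact hne_paa (by rw [e1, hy])
        · exact hne_papb (by rw [e1, hy])
    · refine Finset.mem_erase.2 ⟨?_, Finset.mem_erase.2 ⟨?_, hyV⟩⟩
      · intro e1
        replace e1 : y = pb := e1
        rw [e1] at heA
        rcases parents_of_inDeg_two hinpb hpapb hqpb (fun e' => hqpa e'.symm) heA with hx | hx
        · exact hne_papb (by rw [e1, hx])
        · exact hne_qpb (by rw [e1, hx])
      · intro e1
        replace e1 : y = pa := e1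
        rw [e1] at heA
        have hx : x = ua := parent_unique hinpa heA huapa
        exact hne_uapa (by rw [e1, hx])

end Digraph'

namespace Digraph'

variable {N : Digraph'} {X : Finset ℕ}

lemma exists_cherry (h : N.IsPhylo X) (hts : N.TreeSibling) (htc : N.TimeConsistent) :
    (∃ a b p, a ≠ b ∧ N.outDeg a = 0 ∧ N.outDeg b = 0 ∧ (p,a) ∈ N.A ∧ (p,b) ∈ N.A) ∨
    (∃ a b pa pb, a ≠ b ∧ N.outDeg a = 0 ∧ N.outDeg b = 0 ∧ (pa,a) ∈ N.A ∧ (pb,b) ∈ N.A ∧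
      N.inDeg pb = 2 ∧ (pa,pb) ∈ N.A) := by
  classical
  obtain ⟨t, ht⟩ := htc
  set I := N.V.filter (fun v => N.outDeg v ≠ 0) with hI
  obtain ⟨ρ, hρV, hρin, hρout, hρreach⟩ := h.root
  have hρI : ρ ∈ I := Finset.mem_filter.2 ⟨hρV, by rw [hρout]; omega⟩
  obtain ⟨m, hmI, hmax⟩ := I.exists_max_image t ⟨ρ, hρI⟩
  have key : ∀ n r, (N.V.filter (fun w => N.Reach r w)).card ≤ n → r ∈ N.V →
      N.inDeg r = 2 → (∀ v ∈ I, t v ≤ t r) →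
      ((∃ a b p, a ≠ b ∧ N.outDeg a = 0 ∧ N.outDeg b = 0 ∧ (p,a) ∈ N.A ∧ (p,b) ∈ N.A) ∨
      (∃ a b pa pb, a ≠ b ∧ N.outDeg a = 0 ∧ N.outDeg b = 0 ∧ (pa,a) ∈ N.A ∧ (pb,b) ∈ N.A ∧
        N.inDeg pb = 2 ∧ (pa,pb) ∈ N.A)) := by
    intro n
    induction n with
    | zero =>
      intro r hcard hrV _ _
      exfalso
      have : r ∈ N.V.filter (fun w => N.Reach r w) :=
        Finset.mem_filter.2 ⟨hrV, Relation.ReflTransGen.refl⟩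
      have := Finset.card_pos.2 ⟨r, this⟩
      omega
    | succ n ih =>
      intro r hcard hrV h2 hmaxr
      obtain ⟨p, w, hpr, hpw, hwr, hw⟩ := hts r hrV h2
      have htp : t p = t r := (ht p r hpr).1 h2
      have hwleaf : N.outDeg w = 0 := by
        rcases hw with ⟨hwV, hw1, hw2⟩ | ⟨hwV, hw0⟩
        · exfalso
          have hwI : w ∈ I := Finset.mem_filter.2 ⟨hwV, by rw [hw2]; omega⟩
          have l1 : t w ≤ t r := hmaxr w hwI
          have l2 : t p < t w := (ht p w hpw).2 (by rw [hw1]; omega)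
          omega
        · exact hw0
      have hor : N.outDeg r = 1 := ret_outDeg h hrV h2
      obtain ⟨d, hrd⟩ := out_arc_exists (v := r) (by rw [hor]; omega)
      have hdV : d ∈ N.V := mem_V_snd hrd
      by_cases hd2 : N.inDeg d = 2
      · have htd : t r = t d := (ht r d hrd).1 hd2
        have hsub : N.V.filter (fun w => N.Reach d w) ⊆
            (N.V.filter (fun w => N.Reach r w)).erase r := by
          intro x hx
          obtain ⟨hxV, hxr⟩ := Finset.mem_filter.1 hx
          refine Finset.mem_erase.2 ⟨?_, Finset.mem_filter.2 ⟨hxV, hxr.head hrd⟩⟩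
          intro e
          rw [e] at hxr
          exact h.acyclic r d hrd hxr
        have hlt : (N.V.filter (fun w => N.Reach d w)).card ≤ n := by
          have l1 := Finset.card_le_card hsub
          have l2 : r ∈ N.V.filter (fun w => N.Reach r w) :=
            Finset.mem_filter.2 ⟨hrV, Relation.ReflTransGen.refl⟩
          rw [Finset.card_erase_of_mem l2] at l1
          have := Finset.card_pos.2 ⟨r, l2⟩
          omega
        exact ih d hlt hdV hd2 (fun v hv => (hmaxr v hv).trans_eq htd)
      · have hdleaf : N.outDeg d = 0 := by
          by_contra hdo
          have hdI : d ∈ I := Finset.mem_filter.2 ⟨hdV, hdo⟩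
          have l1 : t d ≤ t r := hmaxr d hdI
          have l2 : t r < t d := (ht r d hrd).2 hd2
          omega
        have hwd : w ≠ d := by
          intro e
          rw [e] at hpw
          have hpr' : p ≠ r := arc_ne h.acyclic hpr
          have := two_le_inDeg hpw hrd hpr'
          rcases h.degrees d hdV with ⟨h1,_⟩|⟨h1,_⟩|⟨h1,_⟩|⟨h1,_⟩ <;> omega
        exact Or.inr ⟨w, d, p, r, hwd, hwleaf, hdleaf, hpw, hrd, h2, hpr⟩
  by_cases hm2 : N.inDeg m = 2
  · exact key _ m le_rfl (Finset.mem_filter.1 hmI).1 hm2 hmax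
  · have hmV : m ∈ N.V := (Finset.mem_filter.1 hmI).1
    have hmo : N.outDeg m ≠ 0 := (Finset.mem_filter.1 hmI).2
    have hom : N.outDeg m = 2 := by
      rcases h.degrees m hmV with ⟨h1,h2⟩|⟨h1,h2⟩|⟨h1,h2⟩|⟨h1,h2⟩ <;> omega
    obtain ⟨c1, c2, hc12, hmc1, hmc2⟩ := two_children hom
    have hcase : ∀ c, (m,c) ∈ N.A → N.inDeg c ≠ 2 → N.outDeg c = 0 := by
      intro c hmc hc2
      by_contra hco
      have hcI : c ∈ I := Finset.mem_filter.2 ⟨mem_V_snd hmc, hco⟩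
      have l1 : t c ≤ t m := hmax c hcI
      have l2 : t m < t c := (ht m c hmc).2 hc2
      omega
    by_cases hc1 : N.inDeg c1 = 2
    · have htc1 : t m = t c1 := (ht m c1 hmc1).1 hc1
      exact key _ c1 le_rfl (mem_V_snd hmc1) hc1 (fun v hv => (hmax v hv).trans_eq htc1)
    · by_cases hc2 : N.inDeg c2 = 2
      · have htc2 : t m = t c2 := (ht m c2 hmc2).1 hc2
        exact key _ c2 le_rfl (mem_V_snd hmc2) hc2 (fun v hv => (hmax v hv).trans_eq htc2)
      · exact Or.inl ⟨c1, c2, m, hc12, hcase c1 hmc1 hc1, hcase c2 hmc2 hc2, hmc1, hmc2⟩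

end Digraph'

namespace Digraph'

lemma two_parents {N : Digraph'} {v : ℕ} (h : N.inDeg v = 2) :
    ∃ c d, c ≠ d ∧ (c,v) ∈ N.A ∧ (d,v) ∈ N.A := by
  have h' : (N.A.filter (fun e => e.2 = v)).card = 2 := h
  have h1 : 1 < (N.A.filter (fun e => e.2 = v)).card := by omega
  obtain ⟨e, he, f, hf, hef⟩ := Finset.one_lt_card.1 h1
  obtain ⟨heA, he1⟩ := Finset.mem_filter.1 he
  obtain ⟨hfA, hf1⟩ := Finset.mem_filter.1 hf
  refine ⟨e.1, f.1, ?_, ?_, ?_⟩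
  · intro hc; apply hef; exact Prod.ext hc (he1.trans hf1.symm)
  · rwa [show (e.1, v) = e from Prod.ext rfl he1.symm]
  · rwa [show (f.1, v) = f from Prod.ext rfl hf1.symm]

lemma main_aux : ∀ n (N : Digraph') (X : Finset ℕ), N.V.card ≤ n → N.IsPhylo X →
    N.TreeSibling → N.TimeConsistent → N.IsOrchard := by
  intro n
  induction n with
  | zero =>
    intro N X hc h _ _
    exfalso
    obtain ⟨ρ, hρV, -⟩ := h.root
    have := Finset.card_pos.2 ⟨ρ, hρV⟩
    omega
  | succ n ih =>
    intro N X hc h hts htc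
    rcases exists_cherry h hts htc with ⟨a, b, p, hab, hla, hlb, hpa, hpb⟩ |
      ⟨a, b, pa, pb, hab, hla, hlb, hpaa, hpbb, hinpb, hpapb⟩
    · -- cherry
      have haL : N.IsLeaf a := ⟨mem_V_snd hpa, hla⟩
      have hbL : N.IsLeaf b := ⟨mem_V_snd hpb, hlb⟩
      by_cases hp0 : N.inDeg p = 0
      · refine ⟨⟨{a}, ∅, by simp⟩, Relation.ReflTransGen.single ?_, a, rfl, rfl⟩
        exact ⟨a, b, Or.inl ⟨⟨hab, haL, hbL, p, hpa, hpb⟩, p, hpa, hpb,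
          Or.inl ⟨hp0, rfl, rfl⟩⟩⟩
      · obtain ⟨u, hup⟩ := in_arc_exists hp0
        obtain ⟨N', hV', hA'⟩ := reduce_exists h hab hpa hpb hla hlb hup
        obtain ⟨hph', hts', htc', hcard⟩ := reduce_all h hab hpa hpb hla hlb hup hV' hA'
        have step : CherryStep N N' := ⟨a, b, Or.inl ⟨⟨hab, haL, hbL, p, hpa, hpb⟩,
          p, hpa, hpb, Or.inr ⟨u, hup, hV', hA'⟩⟩⟩
        obtain ⟨Nf, hchain, hsingle⟩ :=
          ih N' (X.erase b) (by omega) hph' (hts' hts) (htc' htc)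
        exact ⟨Nf, hchain.head step, hsingle⟩
    · -- reticulated cherry
      have haL : N.IsLeaf a := ⟨mem_V_snd hpaa, hla⟩
      have hbL : N.IsLeaf b := ⟨mem_V_snd hpbb, hlb⟩
      have hapb : a ≠ pb := fun e => no_out_of_leaf hla (e ▸ hpbb)
      have hopa : N.outDeg pa = 2 := (deg_of_two_children h hpaa hpapb hapb).1
      have hopb : N.outDeg pb = 1 := ret_outDeg h (mem_V_fst hpbb) hinpb
      -- get a parent q of pb distinct from pa
      obtain ⟨q1, q2, hq12, hq1, hq2⟩ := two_parents hinpb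
      have hq : ∃ q, (q, pb) ∈ N.A ∧ q ≠ pa := by
        by_cases e1 : q1 = pa
        · exact ⟨q2, hq2, fun e2 => hq12 (e1.trans e2.symm)⟩
        · exact ⟨q1, hq1, e1⟩
      obtain ⟨q, hqpb, hqpa⟩ := hq
      -- pa is not the root
      have hpa0 : N.inDeg pa ≠ 0 := by
        intro hpa0
        obtain ⟨ρ, hρV, hρin, hρout, hρreach⟩ := h.root
        have hρpa : ρ = pa := by
          by_contra hne
          obtain ⟨w, hw⟩ := in_arc_of_reach (hρreach pa (mem_V_fst hpaa)) hne
          exact no_in_of_inDeg_zero hpa0 hw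
        have hreachq : N.Reach pa q := hρpa ▸ hρreach q (mem_V_fst hqpb)
        have : q = pa ∨ q = a ∨ q = pb ∨ q = b := by
          rcases Relation.ReflTransGen.cases_head hreachq with e | ⟨w, hw, hwy⟩
          · exact Or.inl e.symm
          · rcases children_of_outDeg_two hopa hpaa hpapb hapb hw with hw1 | hw1
            · rw [hw1] at hwy
              exact Or.inr (Or.inl (reach_leaf hla hwy))
            · rw [hw1] at hwy
              rcases Relation.ReflTransGen.cases_head hwy with e | ⟨w2, hw2, h2y⟩
              · exact Or.inr (Or.inr (Or.inl e.symm))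
              · rw [child_unique hopb hw2 hpbb] at h2y
                exact Or.inr (Or.inr (Or.inr (reach_leaf hlb h2y)))
        rcases this with e | e | e | e
        · exact hqpa e
        · rw [e] at hqpb; exact no_out_of_leaf hla hqpb
        · exact arc_ne h.acyclic hqpb e
        · rw [e] at hqpb; exact no_out_of_leaf hlb hqpb
      obtain ⟨ua, huapa⟩ := in_arc_exists hpa0
      obtain ⟨N', hV', hA'⟩ := cut_exists h hab hpaa hpbb hinpb hpapb huapa hqpb hqpa hla hlb
      obtain ⟨hph', hts', htc', hcard⟩ :=
        cut_all h hab hpaa hpbb hinpb hpapb huapa hqpb hqpa hla hlb hV' hA'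
      have step : CherryStep N N' := ⟨a, b, Or.inr ⟨⟨hab, haL, hbL, pa, pb, hpaa, hpbb,
        hinpb, hpapb⟩, pa, pb, ua, q, hpaa, hpbb, hinpb, hpapb, huapa, hqpb, hqpa, hV', hA'⟩⟩
      obtain ⟨Nf, hchain, hsingle⟩ := ih N' X (by omega) hph' (hts' hts) (htc' htc)
      exact ⟨Nf, hchain.head step, hsingle⟩

end Digraph'

open Digraph'

/-- every tree-sibling time-consistent phylogenetic network is an
orchard network. -/
theorem stmt_8 (N : Digraph') (X : Finset ℕ)
    (h : N.IsPhylo X) (hts : N.TreeSibling) (htc : N.TimeConsistent) :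
    N.IsOrchard :=
  main_aux N.V.card N X le_rfl h hts htc
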